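/- arXiv:1504.04358 — 2 statements merged into one kernel-verified Lean document; each statement's English description precedes it below -/
import Mathlib

section
/- Fix n ≥ 1 with P(W_n = −1) > 0. Under the conditional probability P(· | W_n = −1), the random vector 𝐕(W₁−W₀, …, W_n−W_{n−1}) has the same distribution as (W₁−W₀, …, W_n−W_{n−1}) under the conditional probability P(· | ζ₁ = n). -/
open MeasureTheory Filter ProbabilityTheory
open scoped ENNReal NNReal Classical

/-- The random walk `W_n = X_1 + ⋯ + X_n` built from the increments `X`. -/
noncomputable def walk {Ω : Type*} (X : ℕ → Ω → ℤ) (n : ℕ) (ω : Ω) : ℤ :=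
  ∑ i ∈ Finset.range n, X i ω

/-- `ζ_j = inf {n ≥ 1 : W_n = -j}`. -/
noncomputable def hittingTime {Ω : Type*} (X : ℕ → Ω → ℤ) (j : ℕ) (ω : Ω) : ℕ :=
  sInf {n : ℕ | 1 ≤ n ∧ walk X n ω = -(j : ℤ)}

/-- The `i`-th cyclic shift of the vector `x`. -/
def cyclicShift {β : Type*} {n : ℕ} (i : ℕ) (x : Fin n → β) : Fin n → β :=
  fun k => x ⟨(i + (k : ℕ)) % n, Nat.mod_lt _ k.pos⟩

/-- Partial sums `w_j = x_1 + ⋯ + x_j` (for `j ≤ n`). -/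
noncomputable def partialSum {n : ℕ} (x : Fin n → ℤ) (j : ℕ) : ℤ :=
  ∑ l ∈ Finset.range j, if h : l < n then x ⟨l, h⟩ else 0

/-- `i*(x)`, the first time the walk of partial sums attains its minimum over `{1, …, n}`. -/
noncomputable def istar {n : ℕ} (x : Fin n → ℤ) : ℕ :=
  sInf {j : ℕ | 1 ≤ j ∧ ∀ m : ℕ, 1 ≤ m → m ≤ n → partialSum x j ≤ partialSum x m}

/-- The Vervaat transform of the vector `x`. -/
noncomputable def vervaat {n : ℕ} (x : Fin n → ℤ) : Fin n → ℤ := cyclicShift (istar x) x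


/-! Cyclic lemma. The law of `n` i.i.d. increments is invariant under cyclic shifts, and the
steps are `≥ -1`. For an excursion `y` (partial sums `≥ 0` before time `n`, ending at `-1`) one
has `istar (cyclicShift i y) = n - i`, so the `n` cyclic shifts of `y` are distinct, all end at
`-1`, and are exactly the paths ending at `-1` whose Vervaat transform is `y`. Hence on paths
ending at `-1` the push-forward by the Vervaat transform is `n` times the law restricted to
excursions, which for steps `≥ -1` are the paths with `ζ₁ = n`; normalising gives the claim. -/

section CyclicShift

variable {n : ℕ}

def entry (x : Fin n → ℤ) (l : ℕ) : ℤ := if h : l < n then x ⟨l, h⟩ else 0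

lemma partialSum_eq_sum_entry (x : Fin n → ℤ) (j : ℕ) :
    partialSum x j = ∑ l ∈ Finset.range j, entry x l := rfl

lemma partialSum_succ (x : Fin n → ℤ) {j : ℕ} (hj : j < n) :
    partialSum x (j + 1) = partialSum x j + x ⟨j, hj⟩ := by
  rw [partialSum_eq_sum_entry, Finset.sum_range_succ, ← partialSum_eq_sum_entry, entry, dif_pos hj]

def periodicSum (x : Fin n → ℤ) (m : ℕ) : ℤ := ∑ l ∈ Finset.range m, entry x (l % n)

lemma periodicSum_of_le (x : Fin n → ℤ) {m : ℕ} (hm : m ≤ n) : periodicSum x m = partialSum x m :=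
  Finset.sum_congr rfl fun l hl => by
    rw [Nat.mod_eq_of_lt (lt_of_lt_of_le (Finset.mem_range.mp hl) hm)]; rfl

lemma periodicSum_length_add (x : Fin n → ℤ) (m : ℕ) :
    periodicSum x (n + m) = partialSum x n + periodicSum x m := by
  rw [periodicSum, Finset.sum_range_add, ← periodicSum, periodicSum_of_le x le_rfl]
  simp only [Nat.add_mod_left, periodicSum]

lemma partialSum_cyclicShift (x : Fin n → ℤ) (i : ℕ) {j : ℕ} (hj : j ≤ n) :
    partialSum (cyclicShift i x) j = periodicSum x (i + j) - periodicSum x i := by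
  rw [periodicSum, Finset.sum_range_add, ← periodicSum, add_sub_cancel_left]
  refine Finset.sum_congr rfl fun l hl => ?_
  have hl : l < n := lt_of_lt_of_le (Finset.mem_range.mp hl) hj
  unfold entry
  rw [dif_pos hl, dif_pos (Nat.mod_lt _ (by omega))]
  rfl

lemma partialSum_cyclicShift_of_add_le (x : Fin n → ℤ) {i j : ℕ} (h : i + j ≤ n) :
    partialSum (cyclicShift i x) j = partialSum x (i + j) - partialSum x i := by
  rw [partialSum_cyclicShift x i (by omega), periodicSum_of_le x h, periodicSum_of_le x (by omega)]

lemma partialSum_cyclicShift_of_lt_add (x : Fin n → ℤ) {i j : ℕ} (hi : i ≤ n) (hj : j ≤ n)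
    (h : n < i + j) :
    partialSum (cyclicShift i x) j = partialSum x n + partialSum x (i + j - n) - partialSum x i := by
  rw [partialSum_cyclicShift x i hj, show i + j = n + (i + j - n) by omega, periodicSum_length_add,
    periodicSum_of_le x (by omega), periodicSum_of_le x hi, Nat.add_sub_cancel_left]

lemma partialSum_cyclicShift_length (x : Fin n → ℤ) (i : ℕ) :
    partialSum (cyclicShift i x) n = partialSum x n := by
  rw [partialSum_cyclicShift x i le_rfl, add_comm, periodicSum_length_add, add_sub_cancel_right]

lemma cyclicShift_cyclicShift {β : Type*} (x : Fin n → β) (i j : ℕ) :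
    cyclicShift j (cyclicShift i x) = cyclicShift (i + j) x := by
  funext k
  simp only [cyclicShift, Nat.add_mod_mod, add_assoc]

lemma cyclicShift_length {β : Type*} (x : Fin n → β) : cyclicShift n x = x := by
  funext k
  simp only [cyclicShift, Nat.add_mod_left, Nat.mod_eq_of_lt k.isLt]

end CyclicShift

section Vervaat

variable {n : ℕ}

lemma istar_spec (hn : 1 ≤ n) (x : Fin n → ℤ) :
    1 ≤ istar x ∧ istar x ≤ n ∧
      ∀ m, 1 ≤ m → m ≤ n → partialSum x (istar x) ≤ partialSum x m := by
  obtain ⟨j, hj, hmin⟩ := Finset.exists_min_image (Finset.Icc 1 n) (partialSum x)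
    ⟨1, Finset.mem_Icc.mpr ⟨le_rfl, hn⟩⟩
  rw [Finset.mem_Icc] at hj
  have hjmem : j ∈ {j | 1 ≤ j ∧ ∀ m, 1 ≤ m → m ≤ n → partialSum x j ≤ partialSum x m} :=
    ⟨hj.1, fun m h1 h2 => hmin m (Finset.mem_Icc.mpr ⟨h1, h2⟩)⟩
  obtain ⟨h1, hle⟩ := Nat.sInf_mem ⟨j, hjmem⟩
  exact ⟨h1, (Nat.sInf_le hjmem).trans hj.2, hle⟩

lemma partialSum_istar_lt (hn : 1 ≤ n) (x : Fin n → ℤ) {k : ℕ} (hk1 : 1 ≤ k) (hk : k < istar x) :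
    partialSum x (istar x) < partialSum x k := by
  by_contra! hle
  exact Nat.notMem_of_lt_sInf hk
    ⟨hk1, fun m h1 h2 => hle.trans ((istar_spec hn x).2.2 m h1 h2)⟩

lemma istar_eq_of_first_min {x : Fin n → ℤ} {j : ℕ} (hj : 1 ≤ j) (hjn : j ≤ n)
    (hmin : ∀ m, 1 ≤ m → m ≤ n → partialSum x j ≤ partialSum x m)
    (hfirst : ∀ k, 1 ≤ k → k < j → partialSum x j < partialSum x k) :
    istar x = j :=
  IsLeast.csInf_eq ⟨⟨hj, hmin⟩, fun k ⟨hk1, hk⟩ => by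
    by_contra! hkj
    exact absurd (hk j hj hjn) (not_le.mpr (hfirst k hk1 hkj))⟩

def IsExcursion (x : Fin n → ℤ) : Prop :=
  partialSum x n = -1 ∧ ∀ j, 1 ≤ j → j < n → 0 ≤ partialSum x j

lemma isExcursion_vervaat (hn : 1 ≤ n) {x : Fin n → ℤ} (hx : partialSum x n = -1) :
    IsExcursion (vervaat x) := by
  obtain ⟨h1, hle, hmin⟩ := istar_spec hn x
  refine ⟨by rw [vervaat, partialSum_cyclicShift_length, hx], fun j hj1 hjn => ?_⟩
  rw [vervaat]
  rcases le_or_gt (istar x + j) n with h | h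
  · rw [partialSum_cyclicShift_of_add_le x h]
    linarith [hmin (istar x + j) (by omega) h]
  · rw [partialSum_cyclicShift_of_lt_add x hle hjn.le h, hx]
    linarith [partialSum_istar_lt hn x (k := istar x + j - n) (by omega) (by omega)]

lemma istar_cyclicShift {y : Fin n → ℤ} (hy : IsExcursion y) {i : ℕ} (hi : i < n) :
    istar (cyclicShift i y) = n - i := by
  obtain ⟨hsum, hnonneg⟩ := hy
  have hwi : 0 ≤ partialSum y i := by
    rcases Nat.eq_zero_or_pos i with rfl | hi0
    · simp [partialSum]
    · exact hnonneg i hi0 hi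
  have hval : partialSum (cyclicShift i y) (n - i) = -1 - partialSum y i := by
    rw [partialSum_cyclicShift_of_add_le y (by omega), Nat.add_sub_cancel' hi.le, hsum]
  refine istar_eq_of_first_min (by omega) (by omega) (fun m hm1 hmn => ?_) (fun k hk1 hk => ?_)
  · rw [hval]
    rcases le_or_gt (i + m) n with h | h
    · rw [partialSum_cyclicShift_of_add_le y h]
      rcases h.lt_or_eq with h | h
      · linarith [hnonneg (i + m) (by omega) h]
      · rw [h, hsum]
    · rw [partialSum_cyclicShift_of_lt_add y hi.le hmn h, hsum]
      linarith [hnonneg (i + m - n) (by omega) (by omega)]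
  · rw [hval, partialSum_cyclicShift_of_add_le y (by omega)]
    linarith [hnonneg (i + k) (by omega) (by omega)]

lemma vervaat_cyclicShift {y : Fin n → ℤ} (hy : IsExcursion y) {i : ℕ} (hi : i < n) :
    vervaat (cyclicShift i y) = y := by
  rw [vervaat, istar_cyclicShift hy hi, cyclicShift_cyclicShift, Nat.add_sub_cancel' hi.le,
    cyclicShift_length]

lemma cyclicShift_vervaat (hn : 1 ≤ n) (x : Fin n → ℤ) :
    cyclicShift (n - istar x) (vervaat x) = x := by
  rw [vervaat, cyclicShift_cyclicShift, Nat.add_sub_cancel' (istar_spec hn x).2.1,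
    cyclicShift_length]

lemma IsExcursion.injective_cyclicShift {y : Fin n → ℤ} (hy : IsExcursion y) :
    Function.Injective fun i : Fin n => cyclicShift i y := by
  intro i j h
  have := istar_cyclicShift hy i.isLt
  rw [show cyclicShift i y = cyclicShift j y from h, istar_cyclicShift hy j.isLt] at this
  omega

def bridgeSet (n : ℕ) : Set (Fin n → ℤ) := {x | partialSum x n = -1}

def firstPassageSet (n : ℕ) : Set (Fin n → ℤ) :=
  {x | partialSum x n = -1 ∧ ∀ j, 1 ≤ j → j < n → partialSum x j ≠ -1}

lemma preimage_vervaat_inter_bridgeSet (hn : 1 ≤ n) {y : Fin n → ℤ} (hy : IsExcursion y) :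
    vervaat ⁻¹' {y} ∩ bridgeSet n = Set.range fun i : Fin n => cyclicShift i y := by
  ext x
  constructor
  · rintro ⟨rfl, -⟩
    exact ⟨⟨n - istar x, by have := (istar_spec hn x).1; omega⟩, cyclicShift_vervaat hn x⟩
  · rintro ⟨i, rfl⟩
    exact ⟨vervaat_cyclicShift hy i.isLt, (partialSum_cyclicShift_length y i).trans hy.1⟩

lemma preimage_vervaat_inter_bridgeSet_of_not (hn : 1 ≤ n) {y : Fin n → ℤ}
    (hy : ¬IsExcursion y) : vervaat ⁻¹' {y} ∩ bridgeSet n = ∅ :=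
  Set.eq_empty_of_forall_notMem fun _ ⟨hxy, hx⟩ => hy (hxy ▸ isExcursion_vervaat hn hx)

lemma IsExcursion.mem_firstPassageSet {x : Fin n → ℤ} (hx : IsExcursion x) :
    x ∈ firstPassageSet n :=
  ⟨hx.1, fun j hj1 hjn => by linarith [hx.2 j hj1 hjn]⟩

/-- A path with steps `≥ -1` cannot jump from `≥ 0` to below `-1`. -/
lemma isExcursion_of_mem_firstPassageSet {x : Fin n → ℤ} (hx : x ∈ firstPassageSet n)
    (hskip : ∀ i, -1 ≤ x i) : IsExcursion x := by
  suffices h : ∀ j, j < n → 0 ≤ partialSum x j from ⟨hx.1, fun j _ => h j⟩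
  intro j hjn
  induction j with
  | zero => simp [partialSum]
  | succ j ih =>
    have hne := hx.2 (j + 1) (by omega) hjn
    rw [partialSum_succ x (by omega)] at hne ⊢
    have := ih (by omega)
    have := hskip ⟨j, by omega⟩
    omega

end Vervaat

section CyclicallyExchangeable

variable {n : ℕ} {Q : Measure (Fin n → ℤ)}

theorem map_vervaat_restrict_bridgeSet (hn : 1 ≤ n)
    (hshift : ∀ i x, Q {cyclicShift i x} = Q {x}) (hskip : ∀ x i, x i < -1 → Q {x} = 0) :
    (Q.restrict (bridgeSet n)).map vervaat = (n : ℝ≥0∞) • Q.restrict (firstPassageSet n) := by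
  refine Measure.ext_of_singleton fun y => ?_
  rw [Measure.map_apply (measurable_of_countable _) .of_discrete,
    Measure.restrict_apply .of_discrete, Measure.smul_apply, Measure.restrict_apply .of_discrete,
    smul_eq_mul]
  by_cases hy : IsExcursion y
  · rw [preimage_vervaat_inter_bridgeSet hn hy, Set.inter_eq_left.mpr
      (Set.singleton_subset_iff.mpr hy.mem_firstPassageSet), ← Set.image_univ,
      ← Finset.coe_univ, ← Finset.coe_image, ← sum_measure_singleton,
      Finset.sum_image fun i _ j _ h => hy.injective_cyclicShift h]
    simp [hshift]
  · rw [preimage_vervaat_inter_bridgeSet_of_not hn hy, measure_empty, eq_comm, mul_eq_zero]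
    refine .inr ?_
    by_cases hmem : y ∈ firstPassageSet n
    · obtain ⟨i, hi⟩ : ∃ i, y i < -1 := by
        by_contra! hsteps
        exact hy (isExcursion_of_mem_firstPassageSet hmem hsteps)
      exact measure_mono_null Set.inter_subset_left (hskip y i hi)
    · rw [Set.singleton_inter_eq_empty.mpr hmem, measure_empty]

theorem map_vervaat_cond_bridgeSet (hn : 1 ≤ n)
    (hshift : ∀ i x, Q {cyclicShift i x} = Q {x}) (hskip : ∀ x i, x i < -1 → Q {x} = 0) :
    (Q[|bridgeSet n]).map vervaat = Q[|firstPassageSet n] := by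
  have h := map_vervaat_restrict_bridgeSet hn hshift hskip
  have hmass : Q (bridgeSet n) = n * Q (firstPassageSet n) := by
    simpa [Measure.map_apply (measurable_of_countable _) MeasurableSet.univ] using
      congrArg (fun ρ : Measure (Fin n → ℤ) => ρ Set.univ) h
  have hn0 : (n : ℝ≥0∞) ≠ 0 := by exact_mod_cast (by omega : n ≠ 0)
  rw [ProbabilityTheory.cond, Measure.map_smul, h, hmass, smul_smul,
    ENNReal.mul_inv (.inl hn0) (.inl (ENNReal.natCast_ne_top n)), mul_right_comm,
    ENNReal.inv_mul_cancel hn0 (ENNReal.natCast_ne_top n), one_mul, ProbabilityTheory.cond]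

end CyclicallyExchangeable

lemma map_cond_preimage {Ω β : Type*} [MeasurableSpace Ω] [MeasurableSpace β] (P : Measure Ω)
    {f : Ω → β} (hf : Measurable f) {s : Set β} (hs : MeasurableSet s) :
    (P[|f ⁻¹' s]).map f = (P.map f)[|s] := by
  rw [ProbabilityTheory.cond, ProbabilityTheory.cond, Measure.map_smul, Measure.restrict_map hf hs,
    Measure.map_apply hf hs]

lemma pi_singleton_cyclicShift {β : Type*} [MeasurableSpace β] (ν : Measure β) [SigmaFinite ν]
    {n : ℕ} (i : ℕ) (x : Fin n → β) :
    Measure.pi (fun _ : Fin n => ν) {cyclicShift i x} = Measure.pi (fun _ => ν) {x} := by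
  rw [Measure.pi_singleton, Measure.pi_singleton]
  refine Fintype.prod_bijective (fun k : Fin n => (⟨(i + k) % n, Nat.mod_lt _ k.pos⟩ : Fin n))
    (Finite.injective_iff_bijective.mp fun a b hab => Fin.ext ?_) _ _ fun k => rfl
  have := Nat.ModEq.add_left_cancel' i (congrArg Fin.val hab)
  rwa [Nat.ModEq, Nat.mod_eq_of_lt a.isLt, Nat.mod_eq_of_lt b.isLt] at this

lemma map_fun_eq_pi_of_identDistrib {Ω β : Type*} [MeasurableSpace Ω] [MeasurableSpace β]
    {P : Measure Ω} {X : ℕ → Ω → β} (hXmeas : ∀ i, Measurable (X i)) (hXindep : iIndepFun X P)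
    {ν : Measure β} (hident : ∀ i, P.map (X i) = ν) (n : ℕ) :
    P.map (fun ω (i : Fin n) => X i ω) = Measure.pi fun _ => ν := by
  rw [iIndepFun.map_fun_eq_pi_map (f := fun i : Fin n => X i) (fun i => (hXmeas i).aemeasurable)
    (hXindep.precomp Fin.val_injective)]
  simp only [hident]

section RandomWalk

variable {Ω : Type*} (X : ℕ → Ω → ℤ) (ω : Ω) {n : ℕ}

lemma walk_eq_partialSum {j : ℕ} (hj : j ≤ n) :
    walk X j ω = partialSum (fun i : Fin n => X i ω) j :=
  Finset.sum_congr rfl fun _ hl => by rw [dif_pos (lt_of_lt_of_le (Finset.mem_range.mp hl) hj)]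

lemma hittingTime_one_eq_iff (hn : 1 ≤ n) :
    hittingTime X 1 ω = n ↔ (fun i : Fin n => X i ω) ∈ firstPassageSet n := by
  change _ ↔ partialSum _ n = -1 ∧ ∀ j, 1 ≤ j → j < n → partialSum _ j ≠ -1
  rw [hittingTime, Nat.cast_one, ← walk_eq_partialSum X ω le_rfl]
  constructor
  · intro h
    have hmem := Nat.sInf_mem (Nat.nonempty_of_pos_sInf (h ▸ hn))
    rw [h] at hmem
    refine ⟨hmem.2, fun j hj1 hjn hj => (h ▸ hjn).not_ge (Nat.sInf_le ⟨hj1, ?_⟩)⟩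
    rwa [walk_eq_partialSum X ω hjn.le]
  · rintro ⟨hwn, hfirst⟩
    refine IsLeast.csInf_eq ⟨⟨hn, hwn⟩, fun j ⟨hj1, hj⟩ => not_lt.mp fun hjn => ?_⟩
    exact hfirst j hj1 hjn (by rwa [← walk_eq_partialSum X ω hjn.le])

end RandomWalk

theorem vervaat_transform_law_general
    (μ : PMF ℕ)
    {Ω : Type*} [MeasurableSpace Ω] (P : MeasureTheory.Measure Ω) [IsProbabilityMeasure P]
    (X : ℕ → Ω → ℤ) (hXmeas : ∀ i, Measurable (X i))
    (hXindep : iIndepFun X P)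
    (hXdist : ∀ i : ℕ, ∀ k : ℤ, P {ω | X i ω = k} = if -1 ≤ k then μ (k + 1).toNat else 0)
    (n : ℕ) (hn : 1 ≤ n) :
    MeasureTheory.Measure.map (fun ω => vervaat (fun i : Fin n => X i ω))
        (P[|{ω | walk X n ω = -1}])
      = MeasureTheory.Measure.map (fun ω => fun i : Fin n => X i ω)
        (P[|{ω | hittingTime X 1 ω = n}]) := by
  set V : Ω → Fin n → ℤ := fun ω i => X i ω
  have hV : Measurable V := measurable_pi_lambda _ fun i => hXmeas i
  set ν := P.map (X 0)
  have : IsProbabilityMeasure ν := Measure.isProbabilityMeasure_map (hXmeas 0).aemeasurable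
  have hident : ∀ i, P.map (X i) = ν := fun i => Measure.ext_of_singleton fun k => by
    rw [Measure.map_apply (hXmeas i) .of_discrete, Measure.map_apply (hXmeas 0) .of_discrete]
    exact (hXdist i k).trans (hXdist 0 k).symm
  have hskip : ∀ k : ℤ, k < -1 → ν {k} = 0 := fun k hk => by
    rw [Measure.map_apply (hXmeas 0) .of_discrete]
    exact (hXdist 0 k).trans (if_neg (not_le.mpr hk))
  have hbridge : {ω | walk X n ω = -1} = V ⁻¹' bridgeSet n := by
    ext ω
    exact iff_of_eq (congrArg (· = -1) (walk_eq_partialSum X ω le_rfl))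
  have hhit : {ω | hittingTime X 1 ω = n} = V ⁻¹' firstPassageSet n :=
    Set.ext fun ω => hittingTime_one_eq_iff X ω hn
  change (P[|_]).map (vervaat ∘ V) = _
  rw [hbridge, hhit, ← Measure.map_map (measurable_of_countable _) hV,
    map_cond_preimage P hV .of_discrete, map_cond_preimage P hV .of_discrete,
    map_fun_eq_pi_of_identDistrib hXmeas hXindep hident n]
  exact map_vervaat_cond_bridgeSet hn (pi_singleton_cyclicShift ν) fun x i hi => by
    rw [Measure.pi_singleton]
    exact Finset.prod_eq_zero (Finset.mem_univ i) (hskip _ hi)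

theorem vervaat_transform_law
    (μ : PMF ℕ)
    {Ω : Type*} [MeasurableSpace Ω] (P : MeasureTheory.Measure Ω) [IsProbabilityMeasure P]
    (X : ℕ → Ω → ℤ) (hXmeas : ∀ i, Measurable (X i))
    (hXindep : iIndepFun X P)
    (hXdist : ∀ i : ℕ, ∀ k : ℤ, P {ω | X i ω = k} = if -1 ≤ k then μ (k + 1).toNat else 0)
    (n : ℕ) (hn : 1 ≤ n) (hpos : 0 < P {ω | walk X n ω = -1}) :
    MeasureTheory.Measure.map (fun ω => vervaat (fun i : Fin n => X i ω))
        (P[|{ω | walk X n ω = -1}])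
      = MeasureTheory.Measure.map (fun ω => fun i : Fin n => X i ω)
        (P[|{ω | hittingTime X 1 ω = n}]) :=
  vervaat_transform_law_general μ P X hXmeas hXindep hXdist n hn
end

section
/- For every plane tree τ, one has W(τ) ≤ max_{0 ≤ i ≤ |τ|} 𝒲^{bfs}_i(τ) + 1 ≤ 2·W(τ), where 𝒲^{bfs}(τ) is the breadth-first coding path of τ and W(τ) is the width of τ. -/
/-!
The outdegrees of a set `S` of vertices add up to the number of children of `S`, so
`𝒲^{bfs}_m` is the number of children of the first `m` vertices minus `m`. In breadth-first
order these `m` vertices contain all generations below some `k` and lie in generations `≤ k`,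
so their children lie in generations `1, …, k + 1`; this gives `𝒲^{bfs}_m + 1 ≤ Z_k + Z_{k+1}`.
When `m = Z_0 + ⋯ + Z_{k-1}` the first `m` vertices are exactly the generations below `k`,
their children are the generations `1, …, k`, and `𝒲^{bfs}_m = Z_k - 1`.
-/

open MeasureTheory Filter ProbabilityTheory
open scoped ENNReal NNReal Classical

structure PlaneTree where
  vertices : Finset (List ℕ)
  root_mem : [] ∈ vertices
  prefix_closed : ∀ u ∈ vertices, ∀ v : List ℕ, v <+: u → v ∈ vertices
  children : ∀ u ∈ vertices, ∃ k : ℕ, ∀ i : ℕ, u ++ [i] ∈ vertices ↔ 1 ≤ i ∧ i ≤ k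

namespace PlaneTree

noncomputable def size (τ : PlaneTree) : ℕ := τ.vertices.card

noncomputable def outdeg (τ : PlaneTree) (u : List ℕ) : ℕ :=
  (τ.vertices.filter fun v => ∃ i : ℕ, v = u ++ [i]).card

noncomputable def gen (τ : PlaneTree) (k : ℕ) : ℕ :=
  (τ.vertices.filter fun v => v.length = k).card

noncomputable def height (τ : PlaneTree) : ℕ := τ.vertices.sup List.length

noncomputable def width (τ : PlaneTree) : ℕ :=
  (Finset.range (τ.size + 1)).sup fun k => τ.gen k

noncomputable def maxOutdeg (τ : PlaneTree) : ℕ := τ.vertices.sup fun u => τ.outdeg u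

end PlaneTree

instance : MeasurableSpace PlaneTree := ⊤

/-- The Bienaymé–Galton–Watson measure: `BGW μ {τ} = ∏_{v ∈ τ} μ (k_v τ)`. -/
noncomputable def BGW (μ : PMF ℕ) : MeasureTheory.Measure PlaneTree :=
  MeasureTheory.Measure.sum fun τ : PlaneTree =>
    (∏ v ∈ τ.vertices, μ (τ.outdeg v)) • MeasureTheory.Measure.dirac τ

/-- The lexicographical (depth-first) strict order on vertices: ancestors first, then
first differing coordinate compared with `<`. -/
def lexLT : List ℕ → List ℕ → Prop := fun v w => List.Lex (· < ·) v w

/-- The reverse-lexicographical strict order: ancestors first, then first differing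
coordinate compared with `>`. -/
def revLexLT : List ℕ → List ℕ → Prop := fun v w => List.Lex (· > ·) v w

/-- The breadth-first search strict order. -/
def bfsLT : List ℕ → List ℕ → Prop := fun v w =>
  v.length < w.length ∨ (v.length = w.length ∧ List.Lex (· < ·) v w)

/-- The number of vertices of `τ` strictly preceding `v` for the order `lt`. -/
noncomputable def treeRank (lt : List ℕ → List ℕ → Prop) (τ : PlaneTree) (v : List ℕ) : ℕ :=
  (τ.vertices.filter fun w => lt w v).card

/-- The coding path of the tree `τ` associated with the vertex ordering `lt`:
`𝒲_0 = 0` and `𝒲_{m+1} = 𝒲_m + k_{u(m)} - 1`, where `u(0) ≺ u(1) ≺ ⋯` lists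
the vertices of `τ` in the order `lt`. -/
noncomputable def treePath (lt : List ℕ → List ℕ → Prop) (τ : PlaneTree) (m : ℕ) : ℤ :=
  (∑ v ∈ τ.vertices.filter (fun v => treeRank lt τ v < m), (τ.outdeg v : ℤ)) - m

open Finset

namespace PlaneTree

variable (τ : PlaneTree)

def verticesBelow (k : ℕ) : Finset (List ℕ) := τ.vertices.filter fun v => v.length < k

def childrenOf (S : Finset (List ℕ)) : Finset (List ℕ) :=
  τ.vertices.filter fun w => w ≠ [] ∧ w.dropLast ∈ S

theorem length_lt_size {u : List ℕ} (hu : u ∈ τ.vertices) : u.length < τ.size := by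
  have := card_le_card_of_injOn (s := range (u.length + 1)) (t := τ.vertices)
    (fun i => u.take i) (fun i _ => τ.prefix_closed u hu _ (List.take_prefix i u))
    (fun i hi j hj hij => by
      simp only [coe_range, Set.mem_Iio] at hi hj
      simpa [Nat.lt_succ_iff.mp hi, Nat.lt_succ_iff.mp hj] using congrArg List.length hij)
  simpa [size] using this

theorem gen_le_width (k : ℕ) : τ.gen k ≤ τ.width := by
  by_cases hk : k ≤ τ.size
  · exact le_sup (f := τ.gen) (mem_range.mpr (Nat.lt_succ_of_le hk))
  · suffices τ.gen k = 0 by omega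
    refine card_eq_zero.mpr (filter_eq_empty_iff.mpr fun v hv hvk => ?_)
    have := τ.length_lt_size hv
    omega

theorem card_verticesBelow_succ (k : ℕ) :
    #(τ.verticesBelow (k + 1)) = #(τ.verticesBelow k) + τ.gen k := by
  rw [verticesBelow, verticesBelow, gen, ← card_union_of_disjoint, ← filter_or]
  · exact congrArg _ (filter_congr fun v _ => by omega)
  · exact disjoint_filter.mpr fun v _ h => h.ne

theorem childrenOf_mono {S T : Finset (List ℕ)} (h : S ⊆ T) : τ.childrenOf S ⊆ τ.childrenOf T :=
  monotone_filter_right _ fun _ _ ⟨hne, hS⟩ => ⟨hne, h hS⟩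

theorem childrenOf_verticesBelow (k : ℕ) :
    τ.childrenOf (τ.verticesBelow k) = (τ.verticesBelow (k + 1)).erase [] := by
  ext w
  simp only [childrenOf, verticesBelow, mem_filter, mem_erase, List.length_dropLast]
  constructor
  · rintro ⟨hw, hne, -, hk⟩
    exact ⟨hne, hw, by omega⟩
  · rintro ⟨hne, hw, hk⟩
    have := List.length_pos_iff.mpr hne
    exact ⟨hw, hne, τ.prefix_closed w hw _ (List.dropLast_prefix w), by omega⟩

theorem card_childrenOf_verticesBelow (k : ℕ) :
    #(τ.childrenOf (τ.verticesBelow k)) + 1 = #(τ.verticesBelow (k + 1)) := by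
  rw [childrenOf_verticesBelow]
  exact card_erase_add_one (mem_filter.mpr ⟨τ.root_mem, Nat.succ_pos k⟩)

theorem sum_outdeg_eq_card_childrenOf (S : Finset (List ℕ)) :
    ∑ u ∈ S, τ.outdeg u = #(τ.childrenOf S) := by
  rw [card_eq_sum_card_fiberwise (f := List.dropLast) fun w hw => (mem_filter.mp hw).2.2]
  refine sum_congr rfl fun u hu => congrArg Finset.card ?_
  ext w
  simp only [childrenOf, mem_filter]
  constructor
  · rintro ⟨hw, i, rfl⟩
    simpa using ⟨hw, hu⟩
  · rintro ⟨⟨hw, hne, -⟩, rfl⟩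
    exact ⟨hw, w.getLast hne, (List.dropLast_append_getLast hne).symm⟩

def IsInitialSegment (lt : List ℕ → List ℕ → Prop) (T : Finset (List ℕ)) : Prop :=
  T ⊆ τ.vertices ∧ ∀ v ∈ T, ∀ w ∈ τ.vertices, lt w v → w ∈ T

section treeRank

variable {lt : List ℕ → List ℕ → Prop}

theorem treeRank_lt_treeRank [IsStrictOrder (List ℕ) lt] {v u : List ℕ} (hv : v ∈ τ.vertices)
    (h : lt v u) : treeRank lt τ v < treeRank lt τ u := by
  refine card_lt_card ((ssubset_iff_of_subset ?_).mpr ⟨v, ?_, ?_⟩)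
  · exact monotone_filter_right _ fun w _ hw => _root_.trans hw h
  · exact mem_filter.mpr ⟨hv, h⟩
  · simp [irrefl]

theorem treeRank_injOn [IsStrictTotalOrder (List ℕ) lt] :
    Set.InjOn (treeRank lt τ) τ.vertices := by
  intro v hv w hw hvw
  rcases trichotomous_of lt v w with h | h | h
  · exact absurd hvw (τ.treeRank_lt_treeRank hv h).ne
  · exact h
  · exact absurd hvw (τ.treeRank_lt_treeRank hw h).ne'

theorem card_filter_treeRank_lt_le [IsStrictTotalOrder (List ℕ) lt] (m : ℕ) :
    #(τ.vertices.filter (treeRank lt τ · < m)) ≤ m := by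
  simpa using card_le_card_of_injOn (t := range m) (treeRank lt τ)
    (fun v hv => mem_range.mpr (mem_filter.mp hv).2)
    (τ.treeRank_injOn.mono (filter_subset _ _))

theorem isInitialSegment_filter_treeRank_lt [IsStrictOrder (List ℕ) lt] (m : ℕ) :
    τ.IsInitialSegment lt (τ.vertices.filter (treeRank lt τ · < m)) :=
  ⟨filter_subset _ _, fun _ hv _ hw h =>
    mem_filter.mpr ⟨hw, (τ.treeRank_lt_treeRank hw h).trans (mem_filter.mp hv).2⟩⟩

theorem IsInitialSegment.filter_treeRank_lt_card [IsStrictTotalOrder (List ℕ) lt]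
    {T : Finset (List ℕ)} (hT : τ.IsInitialSegment lt T) :
    τ.vertices.filter (treeRank lt τ · < #T) = T := by
  ext v
  simp only [mem_filter]
  constructor
  · rintro ⟨hv, hlt⟩
    by_contra hvT
    refine hlt.not_ge (card_le_card fun w hw => mem_filter.mpr ⟨hT.1 hw, ?_⟩)
    rcases trichotomous_of lt w v with h | rfl | h
    · exact h
    · exact absurd hw hvT
    · exact absurd (hT.2 w hw v hv h) hvT
  · intro hv
    refine ⟨hT.1 hv, card_lt_card ((ssubset_iff_of_subset ?_).mpr ⟨v, hv, by simp [irrefl]⟩)⟩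
    exact fun w hw => hT.2 v hv w (mem_filter.mp hw).1 (mem_filter.mp hw).2

theorem treePath_eq (m : ℕ) :
    treePath lt τ m = #(τ.childrenOf (τ.vertices.filter (treeRank lt τ · < m))) - m := by
  rw [treePath, ← sum_outdeg_eq_card_childrenOf, Nat.cast_sum]

end treeRank

instance : IsStrictTotalOrder (List ℕ) bfsLT where
  irrefl v := by
    rintro (h | ⟨-, h⟩)
    exacts [lt_irrefl _ h, List.lex_irrefl (fun x => lt_irrefl x) v h]
  trans u v w := by
    rintro (h₁ | ⟨h₁, h₁'⟩) (h₂ | ⟨h₂, h₂'⟩)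
    · exact Or.inl (h₁.trans h₂)
    · exact Or.inl (h₂ ▸ h₁)
    · exact Or.inl (h₁ ▸ h₂)
    · exact Or.inr ⟨h₁.trans h₂, List.lex_trans (fun h₁ h₂ => h₁.trans h₂) h₁' h₂'⟩
  trichotomous v w hvw hwv := by
    simp only [bfsLT, not_or, not_and] at hvw hwv
    exact Std.Trichotomous.trichotomous (r := List.Lex (· < ·)) v w
      (hvw.2 (by omega)) (hwv.2 (by omega))

theorem isInitialSegment_verticesBelow (k : ℕ) :
    τ.IsInitialSegment bfsLT (τ.verticesBelow k) := by
  refine ⟨filter_subset _ _, fun v hv w hw h => mem_filter.mpr ⟨hw, ?_⟩⟩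
  have := (mem_filter.mp hv).2
  rcases h with h | ⟨h, -⟩ <;> omega

theorem IsInitialSegment.exists_verticesBelow_subset {T : Finset (List ℕ)}
    (hT : τ.IsInitialSegment bfsLT T) :
    ∃ k, τ.verticesBelow k ⊆ T ∧ T ⊆ τ.verticesBelow (k + 1) := by
  rcases T.eq_empty_or_nonempty with rfl | hne
  · exact ⟨0, by simp [verticesBelow], empty_subset _⟩
  · obtain ⟨u, hu, hmax⟩ := T.exists_max_image List.length hne
    refine ⟨u.length, fun w hw => ?_, fun w hw => ?_⟩
    · obtain ⟨hwτ, hlt⟩ := mem_filter.mp hw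
      exact hT.2 u hu w hwτ (Or.inl hlt)
    · exact mem_filter.mpr ⟨hT.1 hw, Nat.lt_succ_of_le (hmax w hw)⟩

theorem treePath_bfsLT_card_verticesBelow (k : ℕ) :
    treePath bfsLT τ #(τ.verticesBelow k) = τ.gen k - 1 := by
  rw [treePath_eq, (τ.isInitialSegment_verticesBelow k).filter_treeRank_lt_card]
  have := τ.card_childrenOf_verticesBelow k
  have := τ.card_verticesBelow_succ k
  omega

theorem exists_treePath_bfsLT_add_one_le (m : ℕ) :
    ∃ k, treePath bfsLT τ m + 1 ≤ τ.gen k + τ.gen (k + 1) := by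
  obtain ⟨k, hbelow, habove⟩ :=
    (τ.isInitialSegment_filter_treeRank_lt (lt := bfsLT) m).exists_verticesBelow_subset
  have hm : #(τ.verticesBelow k) ≤ m :=
    (card_le_card hbelow).trans (τ.card_filter_treeRank_lt_le m)
  have hchildren := card_le_card (τ.childrenOf_mono habove)
  have := τ.card_childrenOf_verticesBelow (k + 1)
  have := τ.card_verticesBelow_succ k
  have := τ.card_verticesBelow_succ (k + 1)
  refine ⟨k, ?_⟩
  rw [treePath_eq]
  omega

end PlaneTree

theorem width_le_bfs_max_le_two_width (τ : PlaneTree) :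
    (τ.width : ℤ) ≤
        (Finset.range (τ.size + 1)).sup'
          (Finset.nonempty_range_iff.mpr (Nat.succ_ne_zero _)) (treePath bfsLT τ) + 1
    ∧ (Finset.range (τ.size + 1)).sup'
          (Finset.nonempty_range_iff.mpr (Nat.succ_ne_zero _)) (treePath bfsLT τ) + 1
        ≤ 2 * (τ.width : ℤ) := by
  constructor
  · obtain ⟨k, -, hk⟩ := exists_mem_eq_sup _ nonempty_range_add_one τ.gen
    have hW : τ.width = τ.gen k := hk
    have hm : #(τ.verticesBelow k) ∈ range (τ.size + 1) :=
      mem_range_succ_iff.mpr (card_filter_le _ _)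
    have := le_sup' (treePath bfsLT τ) hm
    rw [τ.treePath_bfsLT_card_verticesBelow] at this
    omega
  · refine Int.add_le_of_le_sub_right (sup'_le _ _ fun m _ => ?_)
    obtain ⟨k, hk⟩ := τ.exists_treePath_bfsLT_add_one_le m
    have := τ.gen_le_width k
    have := τ.gen_le_width (k + 1)
    omega
end
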